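/- Let X_1,…,X_n be drawn from a product distribution on 𝒳^n and let M be a k-pass streaming algorithm with private randomness R. Then for all j ∈ [n]: (i) for all i ∈ {0,1,…,k-1}, I(X_{[1,j]}, R_{(≤k,[1,j])}; X_{[j+1,n]}, R_{(≤k,[j+1,n])} | M_{≤i}, M_{(≤i+1,j)}) = 0; and (ii) for all i ∈ {0,1,…,k}, I(X_{[1,j]}, R_{(≤k,[1,j])}; X_{[j+1,n]}, R_{(≤k,[j+1,n])} | M_{≤i}, M_{(≤i,j)}) = 0. -/

import Mathlib

/-! The initial state `M_0`, the past `(X_{[1,j]}, R_{(≤k,[1,j])})` and the future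
`(X_{[j+1,n]}, R_{(≤k,[j+1,n])})` are mutually independent. In the interleaved sequence
`M_0, M_{(1,j)}, M_1, M_{(2,j)}, M_2, …` each `M_{(r+1,j)}` is a function of `M_r` and the past,
and each `M_{r+1}` a function of `M_{(r+1,j)}` and the future. Both conditioning variables are
prefixes of this sequence, so the event that such a prefix takes a given value is the
intersection of an event of `M_0`, an event of the past and an event of the future. Hence the
joint law of (past, future, conditioning variable) factorizes, and the conditional mutual
information vanishes. -/

open scoped Classical
open Finset

noncomputable section

namespace MultiPassIC

/-- Probability of an event under a probability mass function `p` on a finite sample space. -/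
def pr {Ω : Type} [Fintype Ω] (p : Ω → ℝ) (E : Ω → Prop) : ℝ :=
  ∑ ω, if E ω then p ω else 0

/-- `p` is a probability mass function on the finite type `Ω`. -/
structure IsPMF {Ω : Type} [Fintype Ω] (p : Ω → ℝ) : Prop where
  nonneg : ∀ ω, 0 ≤ p ω
  sum_one : ∑ ω, p ω = 1

/-- Shannon entropy (base 2) of the random variable `A` under `p`. -/
def H {Ω : Type} [Fintype Ω] {α : Type} [Fintype α] (p : Ω → ℝ) (A : Ω → α) : ℝ :=
  -∑ a, pr p (fun ω => A ω = a) * Real.logb 2 (pr p (fun ω => A ω = a))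

/-- Conditional mutual information `I(A ; B ∣ C)` (base 2), with the usual conventions
for vanishing probabilities. -/
def condMI {Ω : Type} [Fintype Ω] {α β γ : Type} [Fintype α] [Fintype β] [Fintype γ]
    (p : Ω → ℝ) (A : Ω → α) (B : Ω → β) (C : Ω → γ) : ℝ :=
  ∑ a, ∑ b, ∑ c,
    pr p (fun ω => A ω = a ∧ B ω = b ∧ C ω = c) *
      Real.logb 2 ((pr p (fun ω => C ω = c) *
          pr p (fun ω => A ω = a ∧ B ω = b ∧ C ω = c)) /
        (pr p (fun ω => A ω = a ∧ C ω = c) * pr p (fun ω => B ω = b ∧ C ω = c)))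

/-- Mutual information `I(A ; B)` (base 2). -/
def MI {Ω : Type} [Fintype Ω] {α β : Type} [Fintype α] [Fintype β]
    (p : Ω → ℝ) (A : Ω → α) (B : Ω → β) : ℝ :=
  condMI p A B (fun _ => (0 : Fin 1))

/-- `X 0, …, X (n-1)` (the first `n` stream elements) are mutually independent under `p`,
i.e. they are drawn from a product distribution. -/
def IsProduct {Ω : Type} [Fintype Ω] {𝒳 : Type} (p : Ω → ℝ) (n : ℕ) (X : ℕ → Ω → 𝒳) : Prop :=
  ∀ x : ℕ → 𝒳,
    pr p (fun ω => ∀ j < n, X j ω = x j) =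
      ∏ j ∈ Finset.range n, pr p (fun ω => X j ω = x j)

/-- A `k`-pass streaming algorithm on the input stream `X 0, …, X (n-1)` (0-indexed;
the paper's `X_j` is `X (j-1)`), over a finite sample space `Ω` with pmf `p`.
`S` is the finite set of memory states, `Rv` the value space of the per-step private
randomness, `init` the initial memory state `M₀`, `R i j` the private randomness used at
step `j` of pass `i` (0-indexed), and `f i j` the corresponding transition function.
The field `indep` states that the initial state, all the per-step random seeds, and the
input stream are mutually independent. -/
structure Alg (Ω : Type) [Fintype Ω] (p : Ω → ℝ) (𝒳 : Type) [Fintype 𝒳]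
    (n k : ℕ) (X : ℕ → Ω → 𝒳) where
  S : Type
  fintS : Fintype S
  Rv : Type
  fintR : Fintype Rv
  init : Ω → S
  R : ℕ → ℕ → Ω → Rv
  f : ℕ → ℕ → 𝒳 → S → Rv → S
  indep : ∀ (m : S) (r : ℕ → ℕ → Rv) (x : ℕ → 𝒳),
    pr p (fun ω => init ω = m ∧ (∀ i < k, ∀ j < n, R i j ω = r i j) ∧ (∀ j < n, X j ω = x j))
      = pr p (fun ω => init ω = m)
        * (∏ i ∈ Finset.range k, ∏ j ∈ Finset.range n, pr p (fun ω => R i j ω = r i j))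
        * pr p (fun ω => ∀ j < n, X j ω = x j)

attribute [instance] Alg.fintS Alg.fintR

variable {Ω : Type} [Fintype Ω] {p : Ω → ℝ} {𝒳 : Type} [Fintype 𝒳] {n k : ℕ} {X : ℕ → Ω → 𝒳}

/-- Running pass `i` (0-indexed) of the algorithm for `j` steps starting from `ini`. -/
def Alg.runPass (M : Alg Ω p 𝒳 n k X) (i : ℕ) (ini : Ω → M.S) : ℕ → Ω → M.S
  | 0 => ini
  | j + 1 => fun ω =>
      if j < n ∧ i < k then
        M.f i j (X j ω) (M.runPass i ini j ω) (M.R i j ω)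
      else M.runPass i ini j ω

/-- `M.passEnd i` is the memory state at the end of pass `i`; `M.passEnd 0 = M₀` is the
initial state, and `M.passEnd i` is the paper's `M_i = M_{(i,n)}`. -/
def Alg.passEnd (M : Alg Ω p 𝒳 n k X) : ℕ → Ω → M.S
  | 0 => M.init
  | i + 1 => M.runPass i (M.passEnd i) n

/-- `M.st i j` is the memory state after reading `j` elements in pass `i+1`;
it is the paper's `M_{(i+1, j)}`. -/
def Alg.st (M : Alg Ω p 𝒳 n k X) (i j : ℕ) : Ω → M.S :=
  M.runPass i (M.passEnd i) j

/-- The multi-pass information cost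
`MIC(M, μ) = Σ_{i=1}^{k} Σ_{j=1}^{n} Σ_{ℓ=1}^{j} I(M_{(i,j)}; X_ℓ | M_{(≤i,ℓ-1)}, M_{(≤i-1,j)})
  + Σ_{i=1}^{k} Σ_{j=1}^{n} Σ_{ℓ=j+1}^{n} I(M_{(i,j)}; X_ℓ | M_{(≤i-1,ℓ-1)}, M_{(≤i-1,j)})`
(all summation indices below are 0-indexed shifts of the paper's 1-indexed ones). -/
def Alg.MIC (M : Alg Ω p 𝒳 n k X) : ℝ :=
  (∑ i ∈ Finset.range k, ∑ j ∈ Finset.range n, ∑ l ∈ Finset.range (j + 1),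
    condMI p (M.st i (j + 1)) (X l)
      (fun ω => ((fun r : Fin (i + 1) => M.st r.1 l ω),
                 (fun r : Fin i => M.st r.1 (j + 1) ω))))
  + (∑ i ∈ Finset.range k, ∑ j ∈ Finset.range n, ∑ l ∈ Finset.Ico (j + 1) n,
    condMI p (M.st i (j + 1)) (X l)
      (fun ω => ((fun r : Fin i => M.st r.1 l ω),
                 (fun r : Fin i => M.st r.1 (j + 1) ω))))

/-- The conditional information cost
`MIC_cond(M, μ) = Σ_{j=1}^{n} Σ_{ℓ=1}^{j} I(M_{(≤k,j)}; X_ℓ | M_{<k}, M_{(≤k,ℓ-1)})`. -/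
def Alg.MICcond (M : Alg Ω p 𝒳 n k X) : ℝ :=
  ∑ j ∈ Finset.range n, ∑ l ∈ Finset.range (j + 1),
    condMI p (fun ω => fun r : Fin k => M.st r.1 (j + 1) ω) (X l)
      (fun ω => ((fun r : Fin k => M.passEnd r.1 ω),
                 (fun r : Fin k => M.st r.1 l ω)))

end MultiPassIC

namespace MultiPassIC

variable {Ω : Type} [Fintype Ω]

lemma pr_congr {p : Ω → ℝ} {E F : Ω → Prop} (h : ∀ ω, E ω ↔ F ω) : pr p E = pr p F :=
  Finset.sum_congr rfl fun ω _ => by simp [h ω]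

lemma pr_eq_sum_pr_and {β : Type} [Fintype β] (p : Ω → ℝ) (E : Ω → Prop) (B : Ω → β) :
    pr p E = ∑ b, pr p (fun ω => E ω ∧ B ω = b) := by
  unfold pr
  rw [Finset.sum_comm]
  refine Finset.sum_congr rfl fun ω _ => ?_
  by_cases h : E ω <;> simp [h]

lemma pr_const_and (p : Ω → ℝ) (Q : Prop) (E : Ω → Prop) :
    pr p (fun ω => Q ∧ E ω) = if Q then pr p E else 0 := by
  by_cases hQ : Q <;> simp [pr, hQ]

section CondMI

variable {α β γ : Type} [Fintype α] [Fintype β] [Fintype γ]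

lemma condMI_eq_zero_of_factor (p : Ω → ℝ) (A : Ω → α) (B : Ω → β) (C : Ω → γ)
    (F : α → γ → ℝ) (G : β → γ → ℝ)
    (h : ∀ a b c, pr p (fun ω => A ω = a ∧ B ω = b ∧ C ω = c) = F a c * G b c) :
    condMI p A B C = 0 := by
  have hAC : ∀ a c, pr p (fun ω => A ω = a ∧ C ω = c) = F a c * ∑ b, G b c := fun a c => by
    rw [pr_eq_sum_pr_and p _ B, Finset.mul_sum]
    exact Finset.sum_congr rfl fun b _ => by rw [← h]; exact pr_congr fun ω => by tauto
  have hBC : ∀ b c, pr p (fun ω => B ω = b ∧ C ω = c) = (∑ a, F a c) * G b c := fun b c => by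
    rw [pr_eq_sum_pr_and p _ A, Finset.sum_mul]
    exact Finset.sum_congr rfl fun a _ => by rw [← h]; exact pr_congr fun ω => by tauto
  have hC : ∀ c, pr p (fun ω => C ω = c) = (∑ a, F a c) * ∑ b, G b c := fun c => by
    rw [pr_eq_sum_pr_and p _ A, Finset.sum_mul]
    exact Finset.sum_congr rfl fun a _ => by rw [← hAC]; exact pr_congr fun ω => by tauto
  have cross : ∀ a b c,
      pr p (fun ω => C ω = c) * pr p (fun ω => A ω = a ∧ B ω = b ∧ C ω = c)
        = pr p (fun ω => A ω = a ∧ C ω = c) * pr p (fun ω => B ω = b ∧ C ω = c) :=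
    fun a b c => by rw [h, hAC, hBC, hC]; ring
  refine Finset.sum_eq_zero fun a _ => Finset.sum_eq_zero fun b _ =>
    Finset.sum_eq_zero fun c _ => ?_
  rw [cross]
  rcases eq_or_ne (pr p (fun ω => A ω = a ∧ C ω = c) * pr p (fun ω => B ω = b ∧ C ω = c)) 0
    with hz | hz
  · simp [hz]
  · simp [div_self hz]

lemma condMI_eq_zero_of_level_sets_split {δ : Type} (p : Ω → ℝ) (A : Ω → α) (B : Ω → β) (C : Ω → γ)
    (D : Ω → δ) (φ : γ → δ) (P : α → γ → Prop) (Q : β → γ → Prop)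
    (hC : ∀ ω c, C ω = c ↔ D ω = φ c ∧ P (A ω) c ∧ Q (B ω) c)
    (u : δ → α → ℝ) (v : δ → β → ℝ)
    (hD : ∀ d a b, pr p (fun ω => D ω = d ∧ A ω = a ∧ B ω = b) = u d a * v d b) :
    condMI p A B C = 0 := by
  refine condMI_eq_zero_of_factor p A B C (fun a c => if P a c then u (φ c) a else 0)
    (fun b c => if Q b c then v (φ c) b else 0) fun a b c => ?_
  have hev : ∀ ω, (A ω = a ∧ B ω = b ∧ C ω = c) ↔
      (P a c ∧ Q b c) ∧ (D ω = φ c ∧ A ω = a ∧ B ω = b) := fun ω => by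
    rw [hC]
    constructor
    · rintro ⟨rfl, rfl, hD, hP, hQ⟩; exact ⟨⟨hP, hQ⟩, hD, rfl, rfl⟩
    · rintro ⟨⟨hP, hQ⟩, hD, rfl, rfl⟩; exact ⟨rfl, rfl, hD, hP, hQ⟩
  rw [pr_congr hev, pr_const_and, hD]
  by_cases hP : P a c <;> by_cases hQ : Q b c <;> simp [hP, hQ]

end CondMI

lemma alternating_prefix_eq_iff {σ : Type} (s t : ℕ → σ) (G H : ℕ → σ → σ)
    (hG : ∀ r, t r = G r (s r)) (hH : ∀ r, s (r + 1) = H r (t r))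
    {a₁ a₂ : ℕ} (h₀ : 0 < a₁) (h₂₁ : a₂ ≤ a₁) (h₁₂ : a₁ ≤ a₂ + 1)
    (c : (Fin a₁ → σ) × (Fin a₂ → σ)) :
    ((fun r : Fin a₁ => s r.1), (fun r : Fin a₂ => t r.1)) = c ↔
      s 0 = c.1 ⟨0, h₀⟩ ∧
        (∀ r : Fin a₂, G r (c.1 ⟨r, by omega⟩) = c.2 r) ∧
        (∀ r (hr : r + 1 < a₁), H r (c.2 ⟨r, by omega⟩) = c.1 ⟨r + 1, hr⟩) := by
  obtain ⟨c₁, c₂⟩ := c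
  simp only [Prod.mk.injEq, funext_iff, Fin.forall_iff]
  constructor
  · rintro ⟨hs, ht⟩
    refine ⟨hs 0 h₀, fun r hr => ?_, fun r hr => ?_⟩
    · rw [← hs r (by omega), ← hG, ht r hr]
    · rw [← ht r (by omega), ← hH, hs (r + 1) hr]
  · rintro ⟨hs₀, hGc, hHc⟩
    have hs : ∀ r (hr : r < a₁), s r = c₁ ⟨r, hr⟩ := by
      intro r
      induction r with
      | zero => exact fun _ => hs₀
      | succ r ih =>
        intro hr
        rw [hH, hG, ih (by omega), hGc r (by omega), hHc r hr]
    exact ⟨hs, fun r hr => by rw [hG, hs r (by omega), hGc r hr]⟩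

section Glue

variable {τ : Type} {j n : ℕ}

def glueSeq (a : Fin j → τ) (b : Fin (n - j) → τ) (d : τ) (l : ℕ) : τ :=
  if h : l < j then a ⟨l, h⟩ else if h' : l - j < n - j then b ⟨l - j, h'⟩ else d

lemma glueSeq_of_lt (a : Fin j → τ) (b : Fin (n - j) → τ) (d : τ) (r : Fin j) :
    glueSeq a b d r = a r := by
  simp [glueSeq]

lemma glueSeq_add (a : Fin j → τ) (b : Fin (n - j) → τ) (d : τ) (r : Fin (n - j)) :
    glueSeq a b d (j + r) = b r := by
  simp [glueSeq]

lemma forall_lt_eq_glueSeq_iff (hjn : j ≤ n) (y : ℕ → τ) (a : Fin j → τ)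
    (b : Fin (n - j) → τ) (d : τ) :
    (∀ l < n, y l = glueSeq a b d l) ↔
      (fun r : Fin j => y r) = a ∧ (fun r : Fin (n - j) => y (j + r)) = b := by
  simp only [funext_iff]
  refine ⟨fun h => ⟨fun r => ?_, fun r => ?_⟩, fun ⟨ha, hb⟩ l hl => ?_⟩
  · rw [h r (by omega), glueSeq_of_lt]
  · rw [h (j + r) (by omega), glueSeq_add]
  · by_cases hlj : l < j
    · simpa [glueSeq, hlj] using ha ⟨l, hlj⟩
    · have hb' := hb ⟨l - j, by omega⟩
      rw [show j + (l - j) = l by omega] at hb'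
      simpa [glueSeq, hlj, show l - j < n - j by omega] using hb'

lemma prod_range_glueSeq {β : Type} [CommMonoid β] (hjn : j ≤ n) (f : ℕ → τ → β)
    (a : Fin j → τ) (b : Fin (n - j) → τ) (d : τ) :
    ∏ l ∈ range n, f l (glueSeq a b d l) =
      (∏ r : Fin j, f r (a r)) * ∏ r : Fin (n - j), f (j + r) (b r) := by
  have hn : range n = range (j + (n - j)) := by rw [Nat.add_sub_cancel' hjn]
  rw [hn, prod_range_add]
  simp only [← Fin.prod_univ_eq_prod_range (fun l => f l (glueSeq a b d l)),
    ← Fin.prod_univ_eq_prod_range (fun l => f (j + l) (glueSeq a b d (j + l))),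
    glueSeq_of_lt, glueSeq_add]

end Glue

variable {p : Ω → ℝ} {𝒳 : Type} [Fintype 𝒳] {n k : ℕ} {X : ℕ → Ω → 𝒳}

namespace Alg

variable (M : Alg Ω p 𝒳 n k X)

lemma runPass_congr (i : ℕ) (ini : Ω → M.S) {ω ω' : Ω} {j t : ℕ} (hjt : j ≤ t)
    (hj : M.runPass i ini j ω = M.runPass i ini j ω')
    (hdata : ∀ l, j ≤ l → l < t → l < n → i < k → X l ω = X l ω' ∧ M.R i l ω = M.R i l ω') :
    M.runPass i ini t ω = M.runPass i ini t ω' := by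
  induction t, hjt using Nat.le_induction with
  | base => exact hj
  | succ t hjt ih =>
    have hprev := ih fun l h₁ h₂ => hdata l h₁ (by omega)
    simp only [runPass]
    split_ifs with h
    · obtain ⟨hx, hr⟩ := hdata t hjt (lt_add_one t) h.1 h.2
      rw [hprev, hx, hr]
    · exact hprev

/-- The paper's `(X_{[1,j]}, R_{(≤k,[1,j])})`. -/
def past (j : ℕ) (ω : Ω) : (Fin j → 𝒳) × (Fin k → Fin j → M.Rv) :=
  ((fun r => X r.1 ω), fun i r => M.R i.1 r.1 ω)

/-- The paper's `(X_{[j+1,n]}, R_{(≤k,[j+1,n])})`. -/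
def future (j : ℕ) (ω : Ω) : (Fin (n - j) → 𝒳) × (Fin k → Fin (n - j) → M.Rv) :=
  ((fun r => X (j + r.1) ω), fun i r => M.R i.1 (j + r.1) ω)

lemma st_factorsThrough (j r : ℕ) :
    (M.st r j).FactorsThrough fun ω => (M.past j ω, M.passEnd r ω) := by
  intro ω ω' h
  simp only [past, Prod.mk.injEq, funext_iff] at h
  obtain ⟨⟨hX, hR⟩, hini⟩ := h
  exact M.runPass_congr r _ (Nat.zero_le j) hini fun l _ hl _ hr =>
    ⟨hX ⟨l, hl⟩, hR ⟨r, hr⟩ ⟨l, hl⟩⟩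

lemma passEnd_succ_factorsThrough {j : ℕ} (hjn : j ≤ n) (r : ℕ) :
    (M.passEnd (r + 1)).FactorsThrough fun ω => (M.future j ω, M.st r j ω) := by
  intro ω ω' h
  simp only [future, Prod.mk.injEq, funext_iff] at h
  obtain ⟨⟨hX, hR⟩, hst⟩ := h
  refine M.runPass_congr r _ hjn hst fun l hjl _ hl hr => ?_
  have hl' : l - j < n - j := by omega
  have hjl' : j + (l - j) = l := by omega
  have hXl := hX ⟨l - j, hl'⟩
  have hRl := hR ⟨r, hr⟩ ⟨l - j, hl'⟩
  simp only [hjl'] at hXl hRl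
  exact ⟨hXl, hRl⟩

lemma past_eq_and_future_eq_iff {j : ℕ} (ω : Ω) (a : (Fin j → 𝒳) × (Fin k → Fin j → M.Rv))
    (b : (Fin (n - j) → 𝒳) × (Fin k → Fin (n - j) → M.Rv)) :
    (M.past j ω = a ∧ M.future j ω = b) ↔
      ((fun r : Fin j => X r ω) = a.1 ∧ (fun r : Fin (n - j) => X (j + r) ω) = b.1) ∧
        ∀ i : Fin k, (fun r : Fin j => M.R i r ω) = a.2 i ∧
          (fun r : Fin (n - j) => M.R i (j + r) ω) = b.2 i := by
  simp only [past, future, Prod.ext_iff, funext_iff (f := fun i : Fin k => _), forall_and]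
  tauto

variable {M} in
lemma pr_init_past_future (hprod : IsProduct p n X) {j : ℕ} (hjn : j ≤ n) (m : M.S)
    (a : (Fin j → 𝒳) × (Fin k → Fin j → M.Rv))
    (b : (Fin (n - j) → 𝒳) × (Fin k → Fin (n - j) → M.Rv)) :
    pr p (fun ω => M.init ω = m ∧ M.past j ω = a ∧ M.future j ω = b) =
      (pr p (fun ω => M.init ω = m) *
        ((∏ r : Fin j, pr p (fun ω => X r ω = a.1 r)) *
          ∏ i : Fin k, ∏ r : Fin j, pr p (fun ω => M.R i r ω = a.2 i r))) *
      ((∏ r : Fin (n - j), pr p (fun ω => X (j + r) ω = b.1 r)) *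
        ∏ i : Fin k, ∏ r : Fin (n - j), pr p (fun ω => M.R i (j + r) ω = b.2 i r)) := by
  rcases isEmpty_or_nonempty Ω with hΩ | hΩ
  · simp [pr]
  obtain ⟨ω₀⟩ := hΩ
  -- the defaults fill positions `≥ n` and passes `≥ k`, which no event here reads
  let ξ : ℕ → 𝒳 := glueSeq a.1 b.1 (X 0 ω₀)
  let ρ : ℕ → ℕ → M.Rv := fun i =>
    if hi : i < k then glueSeq (a.2 ⟨i, hi⟩) (b.2 ⟨i, hi⟩) (M.R 0 0 ω₀) else fun _ => M.R 0 0 ω₀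
  have hρ : ∀ i : Fin k, ρ i = glueSeq (a.2 i) (b.2 i) (M.R 0 0 ω₀) := fun i => dif_pos i.2
  have hev : ∀ ω, (M.init ω = m ∧ M.past j ω = a ∧ M.future j ω = b) ↔
      M.init ω = m ∧ (∀ i < k, ∀ l < n, M.R i l ω = ρ i l) ∧ ∀ l < n, X l ω = ξ l := by
    intro ω
    have hR : (∀ i < k, ∀ l < n, M.R i l ω = ρ i l) ↔
        ∀ i : Fin k, (fun r : Fin j => M.R i r ω) = a.2 i ∧
          (fun r : Fin (n - j) => M.R i (j + r) ω) = b.2 i := by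
      rw [Fin.forall_iff]
      exact forall₂_congr fun i hi => by rw [hρ ⟨i, hi⟩, forall_lt_eq_glueSeq_iff hjn]
    rw [past_eq_and_future_eq_iff, hR, forall_lt_eq_glueSeq_iff hjn]
    tauto
  have hRprod : ∀ i : Fin k, ∏ l ∈ range n, pr p (fun ω => M.R i l ω = ρ i l) =
      (∏ r : Fin j, pr p (fun ω => M.R i r ω = a.2 i r)) *
        ∏ r : Fin (n - j), pr p (fun ω => M.R i (j + r) ω = b.2 i r) := fun i => by
    rw [hρ, prod_range_glueSeq hjn (fun l x => pr p fun ω => M.R i l ω = x)]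
  rw [pr_congr hev, M.indep, hprod ξ, prod_range_glueSeq hjn (fun l x => pr p (fun ω => X l ω = x)),
    ← Fin.prod_univ_eq_prod_range (fun i => ∏ l ∈ range n, pr p (fun ω => M.R i l ω = ρ i l))]
  simp only [hRprod, prod_mul_distrib]
  ring

end Alg

theorem condMI_past_future_eq_zero (hprod : IsProduct p n X) (M : Alg Ω p 𝒳 n k X)
    {j : ℕ} (hjn : j ≤ n) {a₁ a₂ : ℕ} (h₀ : 0 < a₁) (h₂₁ : a₂ ≤ a₁) (h₁₂ : a₁ ≤ a₂ + 1) :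
    condMI p (M.past j) (M.future j)
      (fun ω => ((fun r : Fin a₁ => M.passEnd r.1 ω), (fun r : Fin a₂ => M.st r.1 j ω))) = 0 := by
  let G (r : ℕ) := Function.extend (fun ω => (M.past j ω, M.passEnd r ω)) (M.st r j) Prod.snd
  let H (r : ℕ) :=
    Function.extend (fun ω => (M.future j ω, M.st r j ω)) (M.passEnd (r + 1)) Prod.snd
  have hG : ∀ r ω, M.st r j ω = G r (M.past j ω, M.passEnd r ω) := fun r ω =>
    ((M.st_factorsThrough j r).extend_apply _ ω).symm
  have hH : ∀ r ω, M.passEnd (r + 1) ω = H r (M.future j ω, M.st r j ω) := fun r ω =>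
    ((M.passEnd_succ_factorsThrough hjn r).extend_apply _ ω).symm
  exact condMI_eq_zero_of_level_sets_split p _ _ _ M.init (fun c => c.1 ⟨0, h₀⟩)
    (fun a c => ∀ r : Fin a₂, G r (a, c.1 ⟨r, by omega⟩) = c.2 r)
    (fun b c => ∀ r (hr : r + 1 < a₁), H r (b, c.2 ⟨r, by omega⟩) = c.1 ⟨r + 1, hr⟩)
    (fun ω c => alternating_prefix_eq_iff (fun r => M.passEnd r ω) (fun r => M.st r j ω)
      (fun r m => G r (M.past j ω, m)) (fun r m => H r (M.future j ω, m))
      (fun r => hG r ω) (fun r => hH r ω) h₀ h₂₁ h₁₂ c)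
    _ _ (Alg.pr_init_past_future hprod hjn)

theorem indep_past_future_general
    {Ω : Type} [Fintype Ω] {p : Ω → ℝ} {𝒳 : Type} [Fintype 𝒳] {n k : ℕ}
    {X : ℕ → Ω → 𝒳}
    (hprod : IsProduct p n X)
    (M : Alg Ω p 𝒳 n k X) :
    ∀ j : ℕ, 1 ≤ j → j ≤ n →
      ((∀ i : ℕ, i < k →
        condMI p
          (fun ω => ((fun r : Fin j => X r.1 ω),
                     (fun (i' : Fin k) (r : Fin j) => M.R i'.1 r.1 ω)))
          (fun ω => ((fun r : Fin (n - j) => X (j + r.1) ω),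
                     (fun (i' : Fin k) (r : Fin (n - j)) => M.R i'.1 (j + r.1) ω)))
          (fun ω => ((fun r : Fin (i + 1) => M.passEnd r.1 ω),
                     (fun r : Fin (i + 1) => M.st r.1 j ω))) = 0)
      ∧ (∀ i : ℕ, i ≤ k →
        condMI p
          (fun ω => ((fun r : Fin j => X r.1 ω),
                     (fun (i' : Fin k) (r : Fin j) => M.R i'.1 r.1 ω)))
          (fun ω => ((fun r : Fin (n - j) => X (j + r.1) ω),
                     (fun (i' : Fin k) (r : Fin (n - j)) => M.R i'.1 (j + r.1) ω)))
          (fun ω => ((fun r : Fin (i + 1) => M.passEnd r.1 ω),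
                     (fun r : Fin i => M.st r.1 j ω))) = 0)) :=
  fun _ _ hjn =>
    ⟨fun i _ => condMI_past_future_eq_zero hprod M hjn i.succ_pos le_rfl (by omega),
      fun i _ => condMI_past_future_eq_zero hprod M hjn i.succ_pos (by omega) le_rfl⟩

/-- Claim `indep1`: for a `k`-pass streaming algorithm on a product
distribution, for every `j ∈ [n]`:
(i) for every `i ∈ {0,…,k-1}`,
  `I(X_{[1,j]}, R_{(≤k,[1,j])}; X_{[j+1,n]}, R_{(≤k,[j+1,n])} | M_{≤i}, M_{(≤i+1,j)}) = 0`, and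
(ii) for every `i ∈ {0,…,k}`,
  `I(X_{[1,j]}, R_{(≤k,[1,j])}; X_{[j+1,n]}, R_{(≤k,[j+1,n])} | M_{≤i}, M_{(≤i,j)}) = 0`.
(Indices are 0-shifted: the paper's `X_ℓ` is `X (ℓ-1)`, `M_{(i,j)}` is `M.st (i-1) j`,
and `M_r` is `M.passEnd r`.) -/
theorem indep_past_future
    {Ω : Type} [Fintype Ω] {p : Ω → ℝ} {𝒳 : Type} [Fintype 𝒳] {n k : ℕ}
    {X : ℕ → Ω → 𝒳}
    (hp : IsPMF p) (hprod : IsProduct p n X)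
    (M : Alg Ω p 𝒳 n k X) :
    ∀ j : ℕ, 1 ≤ j → j ≤ n →
      ((∀ i : ℕ, i < k →
        condMI p
          (fun ω => ((fun r : Fin j => X r.1 ω),
                     (fun (i' : Fin k) (r : Fin j) => M.R i'.1 r.1 ω)))
          (fun ω => ((fun r : Fin (n - j) => X (j + r.1) ω),
                     (fun (i' : Fin k) (r : Fin (n - j)) => M.R i'.1 (j + r.1) ω)))
          (fun ω => ((fun r : Fin (i + 1) => M.passEnd r.1 ω),
                     (fun r : Fin (i + 1) => M.st r.1 j ω))) = 0)
      ∧ (∀ i : ℕ, i ≤ k →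
        condMI p
          (fun ω => ((fun r : Fin j => X r.1 ω),
                     (fun (i' : Fin k) (r : Fin j) => M.R i'.1 r.1 ω)))
          (fun ω => ((fun r : Fin (n - j) => X (j + r.1) ω),
                     (fun (i' : Fin k) (r : Fin (n - j)) => M.R i'.1 (j + r.1) ω)))
          (fun ω => ((fun r : Fin (i + 1) => M.passEnd r.1 ω),
                     (fun r : Fin i => M.st r.1 j ω))) = 0)) :=
  indep_past_future_general hprod M

end MultiPassIC
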